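/- arXiv:2112.02280 — 5 statements merged into one kernel-verified Lean document; each statement's English description precedes it below -/
import Mathlib

section
/- Let φ : H → G be a surjective homomorphism of finite groups. (i) The inflation along φ of a permutation G-lattice is a permutation H-lattice. (ii) The inflation along φ of a flabby G-lattice is a flabby H-lattice. (iii) Consequently, if 0 → M → P → F → 0 is a flabby resolution of a G-lattice M, then its inflation along φ is a flabby resolution of the H-lattice obtained from M by inflation. -/
/- In this file, a `G`-lattice is encoded as a `Representation ℤ G M` on a ℤ-module `M`
which is finite and free over `ℤ` (typeclass assumptions `Module.Free ℤ M`,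
`Module.Finite ℤ M`). -/

attribute [instance 2000] Prod.instModule Pi.module

/-- The direct sum of two representations of a group `G` over `R`. -/
def prodRep {R G M N : Type} [CommRing R] [Group G]
    [AddCommGroup M] [Module R M] [AddCommGroup N] [Module R N]
    (ρ : Representation R G M) (τ : Representation R G N) :
    Representation R G (M × N) where
  toFun g := LinearMap.prodMap (ρ g) (τ g)
  map_one' := LinearMap.ext fun x => by simp
  map_mul' g h := LinearMap.ext fun x => by simp

/-- Inflation (or restriction) of a representation along a group homomorphism. -/
def inflRep {R H G M : Type} [CommRing R] [Group H] [Group G]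
    [AddCommGroup M] [Module R M]
    (ρ : Representation R G M) (φ : H →* G) : Representation R H M :=
  MonoidHom.comp ρ φ

/-- A permutation lattice: the module has a finite basis permuted by the group action. -/
def IsPermutationRep {R G M : Type} [CommRing R] [Group G] [AddCommGroup M] [Module R M]
    (ρ : Representation R G M) : Prop :=
  ∃ (ι : Type) (_ : Fintype ι) (b : Module.Basis ι R M),
    ∀ (g : G) (i : ι), ∃ j : ι, ρ g (b i) = b j

/-- An equivariant isomorphism between two representations. -/
def RepIso {R G M N : Type} [CommRing R] [Group G] [AddCommGroup M] [Module R M]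
    [AddCommGroup N] [Module R N]
    (ρ : Representation R G M) (τ : Representation R G N) : Prop :=
  ∃ e : M ≃ₗ[R] N, ∀ (g : G) (m : M), e (ρ g m) = τ g (e m)

/-- Flabbiness: the Tate cohomology group `Ĥ⁻¹(H, M)` vanishes for every subgroup `H ≤ G`,
i.e. every element of `M` killed by the norm element of `H` lies in the subgroup
generated by the elements `h • m' - m'` (`h ∈ H`, `m' ∈ M`). -/
def IsFlabbyRep {G M : Type} [Group G] [AddCommGroup M] [Module ℤ M]
    (ρ : Representation ℤ G M) : Prop :=
  ∀ (H : Subgroup G) (m : M),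
    (∑ᶠ h : H, ρ (h : G) m) = 0 →
      m ∈ AddSubgroup.closure {x : M | ∃ (h : H) (m' : M), x = ρ ((h : G)) m' - m'}

/-- Coflabbiness: `H¹(H, M) = 0` for every subgroup `H ≤ G`, i.e. every `1`-cocycle on `H`
with values in `M` is a coboundary. -/
def IsCoflabbyRep {G M : Type} [Group G] [AddCommGroup M] [Module ℤ M]
    (ρ : Representation ℤ G M) : Prop :=
  ∀ (H : Subgroup G) (f : H → M),
    (∀ h₁ h₂ : H, f (h₁ * h₂) = ρ ((h₁ : G)) (f h₂) + f h₁) →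
    ∃ m : M, ∀ x : H, f x = ρ ((x : G)) m - m

/-- Stably permutation: the lattice becomes permutation after adding a permutation lattice. -/
def IsStablyPermutationRep {G M : Type} [Group G] [AddCommGroup M] [Module ℤ M]
    (ρ : Representation ℤ G M) : Prop :=
  ∃ (Q : Type) (_ : AddCommGroup Q) (_ : Module ℤ Q) (σ : Representation ℤ G Q)
    (Q' : Type) (_ : AddCommGroup Q') (_ : Module ℤ Q') (σ' : Representation ℤ G Q'),
    IsPermutationRep σ ∧ IsPermutationRep σ' ∧ RepIso (prodRep ρ σ) σ'

/-- Invertible: the lattice is a direct summand of a permutation lattice. -/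
def IsInvertibleRep {G M : Type} [Group G] [AddCommGroup M] [Module ℤ M]
    (ρ : Representation ℤ G M) : Prop :=
  ∃ (N : Type) (_ : AddCommGroup N) (_ : Module ℤ N) (τ : Representation ℤ G N),
    IsPermutationRep (prodRep ρ τ)

/-- Similarity of lattices: they become isomorphic after adding permutation lattices. -/
def SimilarRep {G M N : Type} [Group G] [AddCommGroup M] [Module ℤ M]
    [AddCommGroup N] [Module ℤ N]
    (ρ : Representation ℤ G M) (τ : Representation ℤ G N) : Prop :=
  ∃ (Q : Type) (_ : AddCommGroup Q) (_ : Module ℤ Q) (σ : Representation ℤ G Q)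
    (Q' : Type) (_ : AddCommGroup Q') (_ : Module ℤ Q') (σ' : Representation ℤ G Q'),
    IsPermutationRep σ ∧ IsPermutationRep σ' ∧ RepIso (prodRep ρ σ) (prodRep τ σ')

/-- A short exact sequence `0 → M → P → F → 0` of `G`-equivariant `ℤ`-linear maps. -/
def IsEquivariantExact {G M P F : Type} [Group G] [AddCommGroup M] [Module ℤ M]
    [AddCommGroup P] [Module ℤ P] [AddCommGroup F] [Module ℤ F]
    (ρM : Representation ℤ G M) (ρP : Representation ℤ G P) (ρF : Representation ℤ G F)
    (i : M →ₗ[ℤ] P) (π : P →ₗ[ℤ] F) : Prop :=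
  Function.Injective i ∧ Function.Surjective π ∧ LinearMap.range i = LinearMap.ker π ∧
  (∀ (g : G) (m : M), i (ρM g m) = ρP g (i m)) ∧
  (∀ (g : G) (x : P), π (ρP g x) = ρF g (π x))

/-- A flabby resolution `0 → M → P → F → 0`: exact and equivariant, `P` a permutation
lattice and `F` flabby. -/
def IsFlabbyResolution {G M P F : Type} [Group G] [AddCommGroup M] [Module ℤ M]
    [AddCommGroup P] [Module ℤ P] [AddCommGroup F] [Module ℤ F]
    (ρM : Representation ℤ G M) (ρP : Representation ℤ G P) (ρF : Representation ℤ G F)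
    (i : M →ₗ[ℤ] P) (π : P →ₗ[ℤ] F) : Prop :=
  IsEquivariantExact ρM ρP ρF i π ∧ IsPermutationRep ρP ∧ IsFlabbyRep ρF

/-- `F` is a flabby quotient of `M`, i.e. it fits into some flabby resolution of `M`;
it then represents the flabby class `[M]^fl`. -/
def IsFlabbyQuotient {G M F : Type} [Group G] [AddCommGroup M] [Module ℤ M]
    [AddCommGroup F] [Module ℤ F]
    (ρM : Representation ℤ G M) (ρF : Representation ℤ G F) : Prop :=
  ∃ (P : Type) (_ : AddCommGroup P) (_ : Module ℤ P)
    (ρP : Representation ℤ G P) (i : M →ₗ[ℤ] P) (π : P →ₗ[ℤ] F),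
    IsFlabbyResolution ρM ρP ρF i π

/-- First projection of a subgroup of `G × G'` (surjective when the subgroup
is a subdirect product). -/
def projFst {G G' : Type} [Group G] [Group G'] (W : Subgroup (G × G')) : ↥W →* G :=
  (MonoidHom.fst G G').comp W.subtype

/-- Second projection of a subgroup of `G × G'`. -/
def projSnd {G G' : Type} [Group G] [Group G'] (W : Subgroup (G × G')) : ↥W →* G' :=
  (MonoidHom.snd G G').comp W.subtype

/-!
Inflation only changes the acting group, not the module, so a permuted basis stays permuted and
equivariance and exactness are preserved. For flabbiness, a subgroup `K ≤ H` acts on the module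
through its image `φ(K) ≤ G`: the norm of `K` is `|K ∩ ker φ|` times the norm of `φ(K)`, which
vanishes as soon as the norm of `K` does since the lattice is torsion-free, and the elements
`h • m - m` for `h ∈ K` are exactly those for `h ∈ φ(K)`.
-/

open Finset

/- `Module.Free` gives torsion-freeness for the given `Module ℤ M` instance, which need not be
syntactically the canonical one that `IsAddTorsionFree` refers to. -/
theorem Module.Free.isAddTorsionFree_int {M : Type} [AddCommGroup M] [Module ℤ M]
    [Module.Free ℤ M] : IsAddTorsionFree M := by
  obtain rfl : ‹Module ℤ M› = AddCommGroup.toIntModule M := Subsingleton.elim _ _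
  exact Module.isTorsionFree_int_iff_isAddTorsionFree.mp inferInstance

theorem MonoidHom.sum_comp_eq_card_fiber_smul {A B N : Type} [Group A] [Group B] [Fintype A]
    [Fintype B] [DecidableEq B] [AddCommMonoid N] (ψ : A →* B) (hψ : Function.Surjective ψ)
    (u : B → N) :
    ∑ a, u (ψ a) = #{a | ψ a = 1} • ∑ b, u b := by
  rw [Finset.sum_comp, Finset.image_univ_of_surjective hψ, Finset.smul_sum]
  refine Finset.sum_congr rfl fun b _ => ?_
  rw [MonoidHom.card_fiber_eq_of_mem_range ψ (hψ b) ⟨1, map_one ψ⟩]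

section Inflation

variable {H G : Type} [Group H] [Group G]

theorem IsPermutationRep.inflRep {R M : Type} [CommRing R] [AddCommGroup M] [Module R M]
    {ρ : Representation R G M} (hρ : IsPermutationRep ρ) (φ : H →* G) :
    IsPermutationRep (inflRep ρ φ) := by
  obtain ⟨ι, _, b, hb⟩ := hρ
  exact ⟨ι, inferInstance, b, fun h => hb (φ h)⟩

theorem IsFlabbyRep.inflRep [Finite H] {M : Type} [AddCommGroup M] [Module ℤ M]
    [IsAddTorsionFree M] {ρ : Representation ℤ G M} (hρ : IsFlabbyRep ρ) (φ : H →* G) :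
    IsFlabbyRep (inflRep ρ φ) := by
  intro K m hm
  classical
  let ψ : K →* K.map φ := φ.subgroupMap K
  have hψ : Function.Surjective ψ := φ.subgroupMap_surjective K
  have : Fintype K := Fintype.ofFinite K
  have : Fintype (K.map φ) := @Fintype.ofFinite _ (Finite.of_surjective ψ hψ)
  have hnorm : ∑ᶠ g : K.map φ, ρ g m = 0 := by
    have hfiber : #{k | ψ k = 1} ≠ 0 := Finset.card_ne_zero.mpr ⟨1, by simp⟩
    rw [finsum_eq_sum_of_fintype] at hm ⊢
    rw [← nsmul_eq_zero_iff_right hfiber, ← ψ.sum_comp_eq_card_fiber_smul hψ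
      (fun g => ρ g m)]
    exact hm
  have hgen : {x : M | ∃ (g : K.map φ) (m' : M), x = ρ g m' - m'} =
      {x : M | ∃ (h : K) (m' : M), x = ρ (φ h) m' - m'} := by
    ext x
    constructor
    · rintro ⟨⟨_, h, hK, rfl⟩, m', rfl⟩
      exact ⟨⟨h, hK⟩, m', rfl⟩
    · rintro ⟨h, m', rfl⟩
      exact ⟨ψ h, m', rfl⟩
  exact hgen ▸ hρ _ m hnorm

variable {M P F : Type} [AddCommGroup M] [Module ℤ M] [AddCommGroup P] [Module ℤ P]
  [AddCommGroup F] [Module ℤ F] {ρM : Representation ℤ G M} {ρP : Representation ℤ G P}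
  {ρF : Representation ℤ G F} {i : M →ₗ[ℤ] P} {π : P →ₗ[ℤ] F}

theorem IsEquivariantExact.inflRep (hexact : IsEquivariantExact ρM ρP ρF i π) (φ : H →* G) :
    IsEquivariantExact (inflRep ρM φ) (inflRep ρP φ) (inflRep ρF φ) i π := by
  obtain ⟨hi, hπ, hrange, hiequiv, hπequiv⟩ := hexact
  exact ⟨hi, hπ, hrange, fun h => hiequiv (φ h), fun h => hπequiv (φ h)⟩

theorem IsFlabbyResolution.inflRep [Finite H] [IsAddTorsionFree F]
    (hres : IsFlabbyResolution ρM ρP ρF i π) (φ : H →* G) :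
    IsFlabbyResolution (inflRep ρM φ) (inflRep ρP φ) (inflRep ρF φ) i π :=
  ⟨hres.1.inflRep φ, hres.2.1.inflRep φ, hres.2.2.inflRep φ⟩

end Inflation

theorem inflation_of_flabbyResolution_general
    {H G : Type} [Group H] [Group G] [Finite H]
    (φ : H →* G)
    {M P F : Type}
    [AddCommGroup M] [Module ℤ M]
    [AddCommGroup P] [Module ℤ P]
    [AddCommGroup F] [Module ℤ F] [Module.Free ℤ F]
    (ρM : Representation ℤ G M) (ρP : Representation ℤ G P) (ρF : Representation ℤ G F)
    (i : M →ₗ[ℤ] P) (π : P →ₗ[ℤ] F) :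
    (IsPermutationRep ρP → IsPermutationRep (inflRep ρP φ)) ∧
    (IsFlabbyRep ρF → IsFlabbyRep (inflRep ρF φ)) ∧
    (IsFlabbyResolution ρM ρP ρF i π →
      IsFlabbyResolution (inflRep ρM φ) (inflRep ρP φ) (inflRep ρF φ) i π) := by
  have : IsAddTorsionFree F := Module.Free.isAddTorsionFree_int
  exact ⟨fun hP => hP.inflRep φ, fun hF => hF.inflRep φ, fun hres => hres.inflRep φ⟩

/-- Let `φ : H → G` be a surjective homomorphism of finite groups.
(i) Inflation along `φ` of a permutation `G`-lattice is a permutation `H`-lattice.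
(ii) Inflation along `φ` of a flabby `G`-lattice is a flabby `H`-lattice.
(iii) Hence the inflation along `φ` of a flabby resolution `0 → M → P → F → 0` of a
`G`-lattice `M` is a flabby resolution of the inflated `H`-lattice `M`. -/
theorem inflation_of_flabbyResolution
    {H G : Type} [Group H] [Group G] [Finite H] [Finite G]
    (φ : H →* G) (hφ : Function.Surjective φ)
    {M P F : Type}
    [AddCommGroup M] [Module ℤ M] [Module.Free ℤ M] [Module.Finite ℤ M]
    [AddCommGroup P] [Module ℤ P] [Module.Free ℤ P] [Module.Finite ℤ P]
    [AddCommGroup F] [Module ℤ F] [Module.Free ℤ F] [Module.Finite ℤ F]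
    (ρM : Representation ℤ G M) (ρP : Representation ℤ G P) (ρF : Representation ℤ G F)
    (i : M →ₗ[ℤ] P) (π : P →ₗ[ℤ] F) :
    (IsPermutationRep ρP → IsPermutationRep (inflRep ρP φ)) ∧
    (IsFlabbyRep ρF → IsFlabbyRep (inflRep ρF φ)) ∧
    (IsFlabbyResolution ρM ρP ρF i π →
      IsFlabbyResolution (inflRep ρM φ) (inflRep ρP φ) (inflRep ρF φ) i π) :=
  inflation_of_flabbyResolution_general φ ρM ρP ρF i π
end

section
/- Let p be a prime, G a finite group, and M a G-lattice. If M ⊗_ℤ 𝔽_p is indecomposable as an 𝔽_p[G]-module, then M ⊗_ℤ ℤ_p is indecomposable as a ℤ_p[G]-module. In particular, M is an indecomposable G-lattice (indecomposable as a ℤ[G]-module). -/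
/-!
Reducing modulo `p` gives, for `W = M` and for `W = ℤ_p ⊗ M`, a surjective `G`-equivariant
additive map `f : W → 𝔽_p ⊗ M` whose kernel is `p • W`. If `W = N₁ ⊕ N₂` with invariant
summands, then `𝔽_p ⊗ M = f N₁ ⊕ f N₂`: a common value `f x = f y` lifts to `x - y = p • w`, and
projecting onto `N₁` gives `x ∈ p • N₁`. If moreover `f N₁ = 0`, the same projection shows
`N₁ = p • N₁`, and Nakayama's lemma yields an `r ≡ 1 mod p` killing `N₁`; such an `r` is nonzero
because `p` is not a unit, so `N₁ = 0` since `W` is torsion-free.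
-/

open scoped TensorProduct in
/-- Base change of a `G`-lattice `M` over `ℤ` to a commutative ring `R`:
the `R[G]`-module `R ⊗[ℤ] M`. -/
noncomputable def repBaseChange (R : Type) [CommRing R] {G M : Type} [Group G]
    [AddCommGroup M] [Module ℤ M] (ρ : Representation ℤ G M) :
    Representation R G (TensorProduct ℤ R M) :=
  MonoidHom.comp (Module.End.baseChangeHom ℤ R M : Module.End ℤ M →+* Module.End R (TensorProduct ℤ R M)).toMonoidHom ρ

/-- Indecomposability of a representation, i.e. of the corresponding `R[G]`-module:
it is nonzero and admits no splitting into two nonzero invariant direct summands. -/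
def IsIndecomposableRep {R G M : Type} [CommRing R] [Group G] [AddCommGroup M] [Module R M]
    (ρ : Representation R G M) : Prop :=
  (∃ m : M, m ≠ 0) ∧
  ∀ N₁ N₂ : Submodule R M,
    (∀ (g : G), ∀ m ∈ N₁, ρ g m ∈ N₁) →
    (∀ (g : G), ∀ m ∈ N₂, ρ g m ∈ N₂) →
    N₁ ⊓ N₂ = ⊥ → N₁ ⊔ N₂ = ⊤ → N₁ = ⊥ ∨ N₂ = ⊥

open scoped TensorProduct

theorem Submodule.eq_bot_of_le_span_singleton_smul {A W : Type*} [CommRing A] [IsDomain A]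
    [AddCommGroup W] [Module A W] [Module.IsTorsionFree A W] {a : A} (ha : ¬IsUnit a)
    {N : Submodule A W} (hN : N.FG) (hle : N ≤ Ideal.span {a} • N) : N = ⊥ := by
  obtain ⟨r, hr, hr0⟩ := Submodule.exists_sub_one_mem_and_smul_eq_zero_of_fg_of_le_smul _ N hN hle
  have hr_ne : r ≠ 0 := by
    rintro rfl
    obtain ⟨k, hk⟩ := Ideal.mem_span_singleton'.mp hr
    exact ha (IsUnit.of_mul_eq_one (-k) (by linear_combination -hk))
  exact (Submodule.eq_bot_iff N).mpr fun w hw =>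
    (IsRegular.of_ne_zero hr_ne).smul_eq_zero_iff_right.mp (hr0 w hw)

theorem Submodule.eq_smul_projection_of_add_eq_smul {A W : Type*} [CommRing A] [AddCommGroup W]
    [Module A W] {N N' : Submodule A W} (hc : IsCompl N N') {x y w : W} (hx : x ∈ N) (hy : y ∈ N')
    (a : A) (h : x + y = a • w) : x = a • N.projection N' hc w := by
  rw [← map_smul, ← h, map_add, projection_apply_of_mem_left hc hx,
    projection_apply_of_mem_right hc hy, add_zero]

section Reduction

variable {A W V : Type*} [CommRing A] [AddCommGroup W] [Module A W] [AddCommGroup V]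
  {a : A} {f : W →+ V} {N N' : Submodule A W}

theorem le_span_singleton_smul_of_isCompl_of_exact (hf : Function.Exact (a • · : W → W) f)
    (hc : IsCompl N N') (h0 : ∀ w ∈ N, f w = 0) : N ≤ Ideal.span {a} • N := by
  intro w hw
  obtain ⟨w', rfl⟩ := (hf w).mp (h0 w hw)
  rw [Submodule.eq_smul_projection_of_add_eq_smul hc hw N'.zero_mem a (add_zero _)]
  exact Submodule.smul_mem_smul (Ideal.mem_span_singleton_self a)
    (Submodule.projection_apply_mem hc w')

theorem isCompl_map_of_exact (hf : Function.Exact (a • · : W → W) f)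
    (hs : Function.Surjective f) (hc : IsCompl N N') :
    IsCompl (N.toAddSubgroup.map f) (N'.toAddSubgroup.map f) := by
  constructor
  · rw [disjoint_iff, eq_bot_iff]
    rintro _ ⟨⟨x, hx, rfl⟩, ⟨y, hy, hyx⟩⟩
    obtain ⟨w, hw⟩ := (hf (x - y)).mp (by rw [map_sub, hyx, sub_self])
    have := Submodule.eq_smul_projection_of_add_eq_smul hc hx (N'.neg_mem hy) a
      (by rw [← sub_eq_add_neg]; exact hw.symm)
    exact (hf x).mpr ⟨_, this.symm⟩
  · rw [codisjoint_iff, ← AddSubgroup.map_sup, ← Submodule.sup_toAddSubgroup, hc.sup_eq_top]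
    exact AddSubgroup.map_top_of_surjective f hs

theorem map_ne_bot_of_isCompl_of_exact [IsDomain A] [IsNoetherianRing A] [Module.Finite A W]
    [Module.IsTorsionFree A W] (ha : ¬IsUnit a) (hf : Function.Exact (a • · : W → W) f)
    (hc : IsCompl N N') (hN : N ≠ ⊥) : N.toAddSubgroup.map f ≠ ⊥ := by
  intro h0
  refine hN (Submodule.eq_bot_of_le_span_singleton_smul ha (IsNoetherian.noetherian N)
    (le_span_singleton_smul_of_isCompl_of_exact hf hc fun w hw => ?_))
  exact AddSubgroup.mem_bot.mp (h0 ▸ AddSubgroup.mem_map_of_mem f hw)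

end Reduction

theorem IsIndecomposableRep.of_exact_smul {n : ℕ} {A G W V : Type} [CommRing A] [IsDomain A]
    [IsNoetherianRing A] [Group G] [AddCommGroup W] [Module A W] [Module.Finite A W]
    [Module.IsTorsionFree A W] [AddCommGroup V] [Module (ZMod n) V]
    {ρW : Representation A G W} {ρV : Representation (ZMod n) G V} {a : A} (ha : ¬IsUnit a)
    (f : W →+ V) (hf : Function.Exact (a • · : W → W) f) (hs : Function.Surjective f)
    (hequiv : ∀ g w, f (ρW g w) = ρV g (f w)) (h : IsIndecomposableRep ρV) :
    IsIndecomposableRep ρW := by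
  obtain ⟨⟨v, hv⟩, hV⟩ := h
  refine ⟨?_, fun N₁ N₂ hN₁ hN₂ hinf hsup => ?_⟩
  · obtain ⟨w, rfl⟩ := hs v
    exact ⟨w, fun hw => hv (by rw [hw, map_zero])⟩
  have hc : IsCompl N₁ N₂ := ⟨disjoint_iff.mpr hinf, codisjoint_iff.mpr hsup⟩
  let reduce (N : Submodule A W) := AddSubgroup.toZModSubmodule n (N.toAddSubgroup.map f)
  have reduce_invariant (N : Submodule A W) (hN : ∀ g, ∀ w ∈ N, ρW g w ∈ N) :
      ∀ g, ∀ v ∈ reduce N, ρV g v ∈ reduce N := by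
    rintro g _ ⟨w, hw, rfl⟩
    exact ⟨ρW g w, hN g w hw, hequiv g w⟩
  have hcV : IsCompl (reduce N₁) (reduce N₂) :=
    (OrderIso.isCompl_iff _).mp (isCompl_map_of_exact hf hs hc)
  by_contra! hne
  rcases hV _ _ (reduce_invariant N₁ hN₁) (reduce_invariant N₂ hN₂) hcV.inf_eq_bot
    hcV.sup_eq_top with h0 | h0
  · exact map_ne_bot_of_isCompl_of_exact ha hf hc hne.1 ((map_eq_bot_iff _).mp h0)
  · exact map_ne_bot_of_isCompl_of_exact ha hf hc.symm hne.2 ((map_eq_bot_iff _).mp h0)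

theorem IsIndecomposableRep.of_linearEquiv {R G M M' : Type} [CommRing R] [Group G]
    [AddCommGroup M] [Module R M] [AddCommGroup M'] [Module R M']
    {ρ : Representation R G M} {ρ' : Representation R G M'} (e : M ≃ₗ[R] M')
    (he : ∀ g m, e (ρ g m) = ρ' g (e m)) (h : IsIndecomposableRep ρ') :
    IsIndecomposableRep ρ := by
  obtain ⟨⟨m', hm'⟩, h'⟩ := h
  refine ⟨⟨e.symm m', by simpa using hm'⟩, fun N₁ N₂ hN₁ hN₂ hinf hsup => ?_⟩
  have map_invariant (N : Submodule R M) (hN : ∀ g, ∀ m ∈ N, ρ g m ∈ N) :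
      ∀ g, ∀ m ∈ N.map (e : M →ₗ[R] M'), ρ' g m ∈ N.map (e : M →ₗ[R] M') := by
    rintro g _ ⟨m, hm, rfl⟩
    exact ⟨ρ g m, hN g m hm, he g m⟩
  have hc : IsCompl (N₁.map (e : M →ₗ[R] M')) (N₂.map (e : M →ₗ[R] M')) :=
    (Submodule.orderIsoMapComap e).isCompl_iff.mp ⟨disjoint_iff.mpr hinf, codisjoint_iff.mpr hsup⟩
  simpa only [Submodule.map_eq_bot_iff] using
    h' _ _ (map_invariant N₁ hN₁) (map_invariant N₂ hN₂) hc.inf_eq_bot hc.sup_eq_top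

theorem exact_smul_rTensor_of_ker_eq_span_singleton {R A B : Type*} (M : Type*) [CommRing R]
    [CommRing A] [CommRing B] [Algebra R A] [Algebra R B] [AddCommGroup M] [Module R M]
    (φ : A →ₐ[R] B) (hφ : Function.Surjective φ) {a : A} (hker : RingHom.ker φ = Ideal.span {a}) :
    Function.Exact (a • · : A ⊗[R] M → A ⊗[R] M) (φ.toLinearMap.rTensor M) := by
  have hexact : Function.Exact (LinearMap.mulLeft R a) φ.toLinearMap := fun x => by
    rw [AlgHom.toLinearMap_apply, ← RingHom.mem_ker, hker, Ideal.mem_span_singleton']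
    simp only [Set.mem_range, LinearMap.mulLeft_apply, mul_comm a]
  have hsmul : ⇑((LinearMap.mulLeft R a).rTensor M) = (a • · : A ⊗[R] M → A ⊗[R] M) := by
    ext t
    induction t using TensorProduct.induction_on with
    | zero => simp
    | tmul x m => simp [TensorProduct.smul_tmul']
    | add s t hs ht => simp only [map_add, hs, ht, smul_add]
  exact hsmul ▸ rTensor_exact M hexact hφ

theorem repBaseChange_tmul (R : Type) [CommRing R] {G M : Type} [Group G]
    [AddCommGroup M] [Module ℤ M] (ρ : Representation ℤ G M) (g : G) (x : R) (m : M) :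
    repBaseChange R ρ g (x ⊗ₜ[ℤ] m) = x ⊗ₜ[ℤ] (ρ g m) :=
  LinearMap.baseChange_tmul (ρ g) x m

theorem IsIndecomposableRep.repBaseChange_of_ker_eq_span_singleton {n : ℕ} {A G M : Type}
    [CommRing A] [IsDomain A] [IsNoetherianRing A] [Group G] [AddCommGroup M] [Module ℤ M]
    [Module.Free ℤ M] [Module.Finite ℤ M] {ρ : Representation ℤ G M} (φ : A →+* ZMod n) {a : A}
    (ha : ¬IsUnit a) (hker : RingHom.ker φ = Ideal.span {a})
    (h : IsIndecomposableRep (repBaseChange (ZMod n) ρ)) :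
    IsIndecomposableRep (repBaseChange A ρ) := by
  refine h.of_exact_smul ha (φ.toIntAlgHom.toLinearMap.rTensor M).toAddMonoidHom
    (exact_smul_rTensor_of_ker_eq_span_singleton M _ (ZMod.ringHom_surjective φ) hker)
    (LinearMap.rTensor_surjective M (ZMod.ringHom_surjective φ)) fun g t => ?_
  induction t using TensorProduct.induction_on with
  | zero => simp
  | tmul x m => simp [repBaseChange_tmul]
  | add s t hs ht => simp_all

theorem indecomposable_of_indecomposable_mod_p_general
    (p : ℕ) [Fact p.Prime]
    {G M : Type} [Group G]
    [AddCommGroup M] [Module ℤ M] [Module.Free ℤ M] [Module.Finite ℤ M]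
    (ρ : Representation ℤ G M)
    (h : IsIndecomposableRep (repBaseChange (ZMod p) ρ)) :
    IsIndecomposableRep (repBaseChange ℤ_[p] ρ) ∧ IsIndecomposableRep ρ := by
  refine ⟨h.repBaseChange_of_ker_eq_span_singleton PadicInt.toZMod PadicInt.prime_p.not_isUnit
    (by rw [PadicInt.ker_toZMod, PadicInt.maximalIdeal_eq_span_p]), ?_⟩
  have hℤ : IsIndecomposableRep (repBaseChange ℤ ρ) :=
    h.repBaseChange_of_ker_eq_span_singleton (Int.castRingHom (ZMod p))
      (Nat.prime_iff_prime_int.mp Fact.out).not_isUnit (ZMod.ker_intCastRingHom p)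
  exact hℤ.of_linearEquiv (TensorProduct.lid ℤ M).symm fun g m => by
    simp only [TensorProduct.lid_symm_apply, repBaseChange_tmul]

/-- Let `p` be a prime, `G` a finite group and `M` a `G`-lattice.
If `M ⊗_ℤ 𝔽_p` is an indecomposable `𝔽_p[G]`-module, then `M ⊗_ℤ ℤ_p` is an
indecomposable `ℤ_p[G]`-module; in particular `M` is an indecomposable `G`-lattice. -/
theorem indecomposable_of_indecomposable_mod_p
    (p : ℕ) [Fact p.Prime]
    {G M : Type} [Group G] [Finite G]
    [AddCommGroup M] [Module ℤ M] [Module.Free ℤ M] [Module.Finite ℤ M]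
    (ρ : Representation ℤ G M)
    (h : IsIndecomposableRep (repBaseChange (ZMod p) ρ)) :
    IsIndecomposableRep (repBaseChange ℤ_[p] ρ) ∧ IsIndecomposableRep ρ :=
  indecomposable_of_indecomposable_mod_p_general p ρ h
end

section
/- Let λ₁ = (rows (0,1,0,-1),(0,0,-1,1),(-1,0,0,1),(0,1,0,0)) and λ₄ = (rows (0,0,-1,0),(-1,0,0,0),(1,1,1,-2),(0,1,0,-1)) in GL(4,ℤ). There is no invertible 4×4 matrix P over the field ℤ/3ℤ such that P·λ̄₁ = λ̄₁·P and P·λ̄₄ = -λ̄₄·P, where λ̄ᵢ denotes the reduction of λᵢ modulo 3. Consequently there is also no P ∈ GL(4,ℤ) with P·λ₁ = λ₁·P and P·λ₄ = -λ₄·P; that is, the G-lattice ℤ⁴ (with G = ⟨λ₁,λ₄⟩ acting naturally) and its twist by the automorphism σ of G with λ₁^σ = λ₁, λ₄^σ = -λ₄ are non-isomorphic, and remain non-isomorphic after reduction modulo 3. -/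
/-- The matrix `λ₁` (order 12), a generator of `I₄,₇ ≅ C₃⋊C₈ ≤ GL(4,ℤ)`. -/
def lam1 : Matrix (Fin 4) (Fin 4) ℤ :=
  !![0,1,0,-1; 0,0,-1,1; -1,0,0,1; 0,1,0,0]

/-- The matrix `λ₄`, the other generator of `I₄,₇ ≅ C₃⋊C₈ ≤ GL(4,ℤ)`. -/
def lam4 : Matrix (Fin 4) (Fin 4) ℤ :=
  !![0,0,-1,0; -1,0,0,0; 1,1,1,-2; 0,1,0,-1]

private lemma map_mul_int (M N : Matrix (Fin 4) (Fin 4) ℤ) :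
    (M * N).map (Int.cast : ℤ → ZMod 3) =
      M.map (Int.cast : ℤ → ZMod 3) * N.map (Int.cast : ℤ → ZMod 3) := by
  ext i j
  simp [Matrix.mul_apply, Matrix.map_apply]

private lemma map_neg_int (M : Matrix (Fin 4) (Fin 4) ℤ) :
    (-M).map (Int.cast : ℤ → ZMod 3) = -(M.map (Int.cast : ℤ → ZMod 3)) := by
  ext i j
  simp [Matrix.map_apply]

private lemma zmod3_case :
    ¬ ∃ P : Matrix (Fin 4) (Fin 4) (ZMod 3), IsUnit P ∧
        P * lam1.map (Int.cast : ℤ → ZMod 3) = lam1.map (Int.cast : ℤ → ZMod 3) * P ∧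
        P * lam4.map (Int.cast : ℤ → ZMod 3) = (-(lam4.map (Int.cast : ℤ → ZMod 3))) * P := by
  rintro ⟨P, hP, h1, h4⟩
  rw [← Matrix.ext_iff] at h1 h4
  have A00 := h1 0 0; have A01 := h1 0 1; have A02 := h1 0 2; have A03 := h1 0 3
  have A10 := h1 1 0; have A11 := h1 1 1; have A12 := h1 1 2; have A13 := h1 1 3
  have A20 := h1 2 0; have A21 := h1 2 1; have A22 := h1 2 2; have A23 := h1 2 3
  have B01 := h4 0 1; have B02 := h4 0 2
  simp [Matrix.mul_apply, Matrix.neg_apply, Fin.sum_univ_four, lam1, lam4,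
    Matrix.map_apply, Matrix.vecHead, Matrix.vecTail] at A00 A01 A02 A03 A10 A11 A12 A13 A20 A21 A22 A23 B01 B02
  have h3 : (3:ZMod 3) = 0 := by decide
  have k0 : P 2 0 + P 3 0 = 0 := by
    linear_combination A00 + A01 + A02 + A10 + A12 + 2*A13 + 2*A20 + A21 + A23 + B01
      + ((-1) * P 0 0 + (-1) * P 0 3 + P 1 0 + (-1) * P 2 3 + P 3 0 + P 3 3) * h3
  have k1 : P 2 1 + P 3 1 = 0 := by
    linear_combination A01 + 2*A03 + 2*A10 + 2*A11 + A12 + 2*A13 + A20 + A21 + 2*A22 + 2*B01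
      + ((-1) * P 0 1 + (-2) * P 0 2 + (-1) * P 0 3 + (-1) * P 2 0 + P 2 1 + (-1) * P 2 3 + P 3 0 + P 3 1 + P 3 2) * h3
  have k2 : P 2 2 + P 3 2 = 0 := by
    linear_combination A03 + A10 + A11 + A12 + A13 + 2*A20 + 2*A21 + A22 + B02
      + ((-1) * P 0 1 + (-1) * P 0 2 + (-1) * P 2 0 + P 2 2 + (-1) * P 2 3 + P 3 0 + P 3 1 + P 3 2) * h3
  have k3 : P 2 3 + P 3 3 = 0 := by
    linear_combination 2*A00 + A10 + A12 + A13 + A20 + 2*A22 + A23 + 2*B01 + B02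
      + ((-1) * P 0 2 + (-1) * P 0 3 + P 1 0 + P 2 1 + P 3 2 + P 3 3) * h3
  have hdet : P.det = 0 := by
    have e1 : P.det = (P.updateRow 3 (P 3 + (1:ZMod 3) • P 2)).det :=
      (Matrix.det_updateRow_add_smul_self P (by decide : (3:Fin 4) ≠ 2) 1).symm
    rw [e1]
    apply Matrix.det_eq_zero_of_row_eq_zero 3
    intro j
    rw [Matrix.updateRow_self]
    fin_cases j
    · simpa using by linear_combination k0
    · simpa using by linear_combination k1
    · simpa using by linear_combination k2
    · simpa using by linear_combination k3
  have := (Matrix.isUnit_iff_isUnit_det P).mp hP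
  rw [hdet] at this
  simp at this

/-- There is no invertible `4 × 4` matrix `P` over `ℤ/3ℤ` with
`P·λ̄₁ = λ̄₁·P` and `P·λ̄₄ = -λ̄₄·P` (bars denoting reduction mod 3); consequently there is
also no such `P ∈ GL(4,ℤ)`.  That is, the `G`-lattice `ℤ⁴` (for `G = ⟨λ₁,λ₄⟩`) and its
twist by the automorphism `σ` of `G` fixing `λ₁` and sending `λ₄` to `-λ₄` are
non-isomorphic, and remain non-isomorphic after reduction modulo 3. -/
theorem no_intertwiner_C3C8_twist :
    (¬ ∃ P : Matrix (Fin 4) (Fin 4) (ZMod 3), IsUnit P ∧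
        P * lam1.map (Int.cast : ℤ → ZMod 3) = lam1.map (Int.cast : ℤ → ZMod 3) * P ∧
        P * lam4.map (Int.cast : ℤ → ZMod 3) = (-(lam4.map (Int.cast : ℤ → ZMod 3))) * P) ∧
    (¬ ∃ P : Matrix (Fin 4) (Fin 4) ℤ, IsUnit P ∧
        P * lam1 = lam1 * P ∧ P * lam4 = (-lam4) * P) := by
  refine ⟨zmod3_case, ?_⟩
  rintro ⟨P, hP, h1, h4⟩
  apply zmod3_case
  refine ⟨P.map (Int.cast : ℤ → ZMod 3), ?_, ?_, ?_⟩
  · exact hP.map (Int.castRingHom (ZMod 3)).mapMatrix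
  · have := congrArg (Matrix.map · (Int.cast : ℤ → ZMod 3)) h1
    simpa [map_mul_int] using this
  · have := congrArg (Matrix.map · (Int.cast : ℤ → ZMod 3)) h4
    simpa [map_mul_int, map_neg_int] using this
end

section
/- Let λ₁ = (rows (0,1,0,-1),(0,0,-1,1),(-1,0,0,1),(0,1,0,0)), λ₂ = (rows (0,0,-1,0),(-1,-1,-1,2),(1,0,0,0),(0,-1,-1,1)), and λ₂^τ = (rows (0,1,0,0),(-1,0,0,0),(-1,-1,-1,2),(-1,0,-1,1)) in GL(4,ℤ). There is no invertible 4×4 matrix P over the field ℤ/2ℤ such that P·λ̄₁ = λ̄₁·P and P·λ̄₂ = λ̄₂^τ·P, where bars denote reduction of entries modulo 2. Consequently there is also no P ∈ GL(4,ℤ) with P·λ₁ = λ₁·P and P·λ₂ = λ₂^τ·P; that is, the lattice ℤ⁴ with the action of G = ⟨λ₁,λ₂⟩ and the lattice ℤ⁴ with the action of G^τ = ⟨λ₁,λ₂^τ⟩ (via the automorphism τ : λ₁ ↦ λ₁, λ₂ ↦ λ₂^τ) are non-isomorphic, and remain non-isomorphic after reduction modulo 2. -/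
/-- The matrix `λ₂`, the other generator of `N₄,₁₃₇ ≅ Q₈ × C₃ ≤ GL(4,ℤ)`. -/
def lam2 : Matrix (Fin 4) (Fin 4) ℤ :=
  !![0,0,-1,0; -1,-1,-1,2; 1,0,0,0; 0,-1,-1,1]

/-- The matrix `λ₂^τ`, the image of `λ₂` under the automorphism `τ` of
`G = ⟨λ₁, λ₂⟩` fixing `λ₁`. -/
def lam2tau : Matrix (Fin 4) (Fin 4) ℤ :=
  !![0,1,0,0; -1,0,0,0; -1,-1,-1,2; -1,0,-1,1]

theorem eq_of_isUnit_intertwiner_of_mem_adjoin {R A : Type*} [CommSemiring R] [Semiring A]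
    [Algebra R A] {P a b c : A} (hP : IsUnit P) (ha : P * a = a * P)
    (hb : b ∈ Algebra.adjoin R {a}) (hbc : P * b = c * P) : b = c :=
  hP.mul_right_cancel <|
    (Algebra.commute_of_mem_adjoin_singleton_of_commute hb ha).eq.symm.trans hbc

theorem lam2_mod_two_eq :
    lam2.map (Int.cast : ℤ → ZMod 2) =
      lam1.map (Int.cast : ℤ → ZMod 2) + lam1.map (Int.cast : ℤ → ZMod 2) ^ 2 := by
  decide

theorem lam2_mod_two_mem_adjoin_lam1 :
    lam2.map (Int.cast : ℤ → ZMod 2) ∈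
      Algebra.adjoin (ZMod 2) {lam1.map (Int.cast : ℤ → ZMod 2)} := by
  rw [lam2_mod_two_eq]
  exact add_mem (Algebra.self_mem_adjoin_singleton _ _)
    (pow_mem (Algebra.self_mem_adjoin_singleton _ _) 2)

theorem lam2_mod_two_ne_lam2tau :
    lam2.map (Int.cast : ℤ → ZMod 2) ≠ lam2tau.map (Int.cast : ℤ → ZMod 2) := by
  intro h
  have := congrFun (congrFun h 0) 1
  simp [lam2, lam2tau] at this

theorem not_exists_isUnit_intertwiner_mod_two :
    ¬ ∃ P : Matrix (Fin 4) (Fin 4) (ZMod 2), IsUnit P ∧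
      P * lam1.map (Int.cast : ℤ → ZMod 2) = lam1.map (Int.cast : ℤ → ZMod 2) * P ∧
      P * lam2.map (Int.cast : ℤ → ZMod 2) = lam2tau.map (Int.cast : ℤ → ZMod 2) * P := by
  rintro ⟨P, hP, h1, h2⟩
  exact lam2_mod_two_ne_lam2tau
    (eq_of_isUnit_intertwiner_of_mem_adjoin hP h1 lam2_mod_two_mem_adjoin_lam1 h2)

/-- There is no invertible `4 × 4` matrix `P` over `ℤ/2ℤ` with
`P·λ̄₁ = λ̄₁·P` and `P·λ̄₂ = λ̄₂^τ·P` (bars denoting reduction mod 2); consequently there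
is also no such `P ∈ GL(4,ℤ)`.  That is, the lattice `ℤ⁴` with the action of
`G = ⟨λ₁,λ₂⟩` and the lattice `ℤ⁴` with the action of `G^τ = ⟨λ₁,λ₂^τ⟩` are
non-isomorphic, and remain non-isomorphic after reduction modulo 2. -/
theorem no_intertwiner_Q8C3_twist :
    (¬ ∃ P : Matrix (Fin 4) (Fin 4) (ZMod 2), IsUnit P ∧
        P * lam1.map (Int.cast : ℤ → ZMod 2) = lam1.map (Int.cast : ℤ → ZMod 2) * P ∧
        P * lam2.map (Int.cast : ℤ → ZMod 2) = lam2tau.map (Int.cast : ℤ → ZMod 2) * P) ∧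
    (¬ ∃ P : Matrix (Fin 4) (Fin 4) ℤ, IsUnit P ∧
        P * lam1 = lam1 * P ∧ P * lam2 = lam2tau * P) := by
  refine ⟨not_exists_isUnit_intertwiner_mod_two, ?_⟩
  rintro ⟨P, hP, h1, h2⟩
  let reduce := (Int.castRingHom (ZMod 2)).mapMatrix (m := Fin 4)
  exact not_exists_isUnit_intertwiner_mod_two ⟨reduce P, hP.map reduce,
    (map_mul reduce _ _).symm.trans ((congrArg reduce h1).trans (map_mul reduce _ _)),
    (map_mul reduce _ _).symm.trans ((congrArg reduce h2).trans (map_mul reduce _ _))⟩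
end

section
/- Let α₁ = (rows (-1,-1,-1,2),(0,0,1,0),(0,-1,0,0),(-1,-1,0,1)), α₂ = (rows (0,0,-1,0),(-1,-1,-1,2),(1,0,0,0),(0,-1,-1,1)), α₃ = (rows (0,0,0,-1),(0,-1,-1,1),(1,1,0,-1),(1,0,0,-1)), α₄ = (rows (-1,-1,-1,2),(0,1,0,0),(0,0,1,0),(-1,0,0,1)) in GL(4,ℤ). There is no invertible 4×4 matrix P over the field ℤ/3ℤ such that P·ᾱᵢ = ᾱᵢ·P for i = 1,2,3 and P·ᾱ₄ = -ᾱ₄·P, where bars denote reduction of entries modulo 3. Consequently there is also no P ∈ GL(4,ℤ) with P·αᵢ = αᵢ·P for i = 1,2,3 and P·α₄ = -α₄·P; that is, the G-lattice ℤ⁴ (with G = ⟨α₁,α₂,α₃,α₄⟩ acting naturally) and its twist by the automorphism τ of G fixing α₁,α₂,α₃ and sending α₄ to -α₄ are non-isomorphic, and remain non-isomorphic after reduction modulo 3. -/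
/-- The matrix `α₁`, a generator of `N₄,₁₄₅ ≅ SL(2,𝔽₃)⋊C₄ ≤ GL(4,ℤ)`. -/
def alpha1 : Matrix (Fin 4) (Fin 4) ℤ :=
  !![-1,-1,-1,2; 0,0,1,0; 0,-1,0,0; -1,-1,0,1]

/-- The matrix `α₂`, a generator of `N₄,₁₄₅ ≅ SL(2,𝔽₃)⋊C₄ ≤ GL(4,ℤ)`. -/
def alpha2 : Matrix (Fin 4) (Fin 4) ℤ :=
  !![0,0,-1,0; -1,-1,-1,2; 1,0,0,0; 0,-1,-1,1]

/-- The matrix `α₃`, a generator of `N₄,₁₄₅ ≅ SL(2,𝔽₃)⋊C₄ ≤ GL(4,ℤ)`. -/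
def alpha3 : Matrix (Fin 4) (Fin 4) ℤ :=
  !![0,0,0,-1; 0,-1,-1,1; 1,1,0,-1; 1,0,0,-1]

/-- The matrix `α₄`, a generator of `N₄,₁₄₅ ≅ SL(2,𝔽₃)⋊C₄ ≤ GL(4,ℤ)`. -/
def alpha4 : Matrix (Fin 4) (Fin 4) ℤ :=
  !![-1,-1,-1,2; 0,1,0,0; 0,0,1,0; -1,0,0,1]

private lemma map_mul3 (M N : Matrix (Fin 4) (Fin 4) ℤ) :
    (M * N).map (Int.cast : ℤ → ZMod 3) = M.map Int.cast * N.map Int.cast := by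
  ext i j
  simp [Matrix.map_apply, Matrix.mul_apply]

private lemma map_neg3 (M : Matrix (Fin 4) (Fin 4) ℤ) :
    (-M).map (Int.cast : ℤ → ZMod 3) = -(M.map Int.cast) := by
  ext i j
  simp [Matrix.map_apply]

/-- There is no invertible `4 × 4` matrix `P` over `ℤ/3ℤ` with
`P·ᾱᵢ = ᾱᵢ·P` for `i = 1,2,3` and `P·ᾱ₄ = -ᾱ₄·P` (bars denoting reduction mod 3);
consequently there is also no such `P ∈ GL(4,ℤ)`.  That is, the `G`-lattice `ℤ⁴` (for
`G = ⟨α₁,α₂,α₃,α₄⟩`) and its twist by the automorphism `τ` of `G` fixing `α₁,α₂,α₃` and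
sending `α₄` to `-α₄` are non-isomorphic, and remain non-isomorphic after reduction
modulo 3. -/
theorem no_intertwiner_SL23C4_twist :
    (¬ ∃ P : Matrix (Fin 4) (Fin 4) (ZMod 3), IsUnit P ∧
        P * alpha1.map (Int.cast : ℤ → ZMod 3) = alpha1.map (Int.cast : ℤ → ZMod 3) * P ∧
        P * alpha2.map (Int.cast : ℤ → ZMod 3) = alpha2.map (Int.cast : ℤ → ZMod 3) * P ∧
        P * alpha3.map (Int.cast : ℤ → ZMod 3) = alpha3.map (Int.cast : ℤ → ZMod 3) * P ∧
        P * alpha4.map (Int.cast : ℤ → ZMod 3) = (-(alpha4.map (Int.cast : ℤ → ZMod 3))) * P) ∧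
    (¬ ∃ P : Matrix (Fin 4) (Fin 4) ℤ, IsUnit P ∧
        P * alpha1 = alpha1 * P ∧ P * alpha2 = alpha2 * P ∧
        P * alpha3 = alpha3 * P ∧ P * alpha4 = (-alpha4) * P) := by
  have key : ∀ P : Matrix (Fin 4) (Fin 4) (ZMod 3),
      P * alpha1.map (Int.cast : ℤ → ZMod 3) = alpha1.map (Int.cast : ℤ → ZMod 3) * P →
      P * alpha2.map (Int.cast : ℤ → ZMod 3) = alpha2.map (Int.cast : ℤ → ZMod 3) * P →
      P * alpha4.map (Int.cast : ℤ → ZMod 3) = (-(alpha4.map (Int.cast : ℤ → ZMod 3))) * P →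
      P = 0 := by
    intro P h1 h2 h4
    have hA1 : alpha1.map (Int.cast : ℤ → ZMod 3) = !![2,2,2,2; 0,0,1,0; 0,2,0,0; 2,2,0,1] := by
      decide
    have hA2 : alpha2.map (Int.cast : ℤ → ZMod 3) = !![0,0,2,0; 2,2,2,2; 1,0,0,0; 0,2,2,1] := by
      decide
    have hA4 : alpha4.map (Int.cast : ℤ → ZMod 3) = !![2,2,2,2; 0,1,0,0; 0,0,1,0; 2,0,0,1] := by
      decide
    rw [hA1] at h1
    rw [hA2] at h2
    rw [hA4] at h4
    have h3 : (3 : ZMod 3) = 0 := by decide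
    have E1_0_0 := congrFun (congrFun h1 0) 0
    have E1_0_1 := congrFun (congrFun h1 0) 1
    have E1_0_2 := congrFun (congrFun h1 0) 2
    have E1_0_3 := congrFun (congrFun h1 0) 3
    have E1_1_0 := congrFun (congrFun h1 1) 0
    have E1_1_1 := congrFun (congrFun h1 1) 1
    have E1_1_2 := congrFun (congrFun h1 1) 2
    have E1_1_3 := congrFun (congrFun h1 1) 3
    have E2_0_0 := congrFun (congrFun h2 0) 0
    have E2_0_1 := congrFun (congrFun h2 0) 1
    have E2_0_2 := congrFun (congrFun h2 0) 2
    have E2_0_3 := congrFun (congrFun h2 0) 3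
    have E4_0_0 := congrFun (congrFun h4 0) 0
    have E4_0_1 := congrFun (congrFun h4 0) 1
    have E4_0_2 := congrFun (congrFun h4 0) 2
    have E4_0_3 := congrFun (congrFun h4 0) 3
    simp only [Matrix.mul_apply, Matrix.neg_apply, Fin.sum_univ_four,
      Matrix.cons_val_zero, Matrix.cons_val_one, Matrix.head_cons, Matrix.cons_val_two,
      Matrix.tail_cons, Matrix.cons_val_three, Matrix.head_fin_const,
      Matrix.cons_val', Matrix.of_apply] at E1_0_0 E1_0_1 E1_0_2 E1_0_3 E1_1_0 E1_1_1 E1_1_2 E1_1_3 E2_0_0 E2_0_1 E2_0_2 E2_0_3 E4_0_0 E4_0_1 E4_0_2 E4_0_3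
    have z00 : P 0 0 = 0 := by linear_combination 2 * E1_0_0 + 2 * E1_0_3 + 2 * E4_0_0 + 2 * E4_0_3 + (-5) * P 0 0 * h3 + (-4) * P 0 3 * h3
    have z01 : P 0 1 = 0 := by linear_combination 2 * E1_0_0 + 2 * E1_0_1 + 2 * E1_0_2 + 2 * E4_0_0 + 2 * E4_0_1 + 2 * E4_0_2 + (-8) * P 0 0 * h3 + (-1) * P 0 1 * h3 + (-2) * P 0 2 * h3 + (-4) * P 0 3 * h3
    have z02 : P 0 2 = 0 := by linear_combination 2 * E1_0_0 + E1_0_1 + 2 * E1_0_2 + E1_0_3 + 2 * E4_0_0 + E4_0_1 + 2 * E4_0_2 + E4_0_3 + (-8) * P 0 0 * h3 + (-1) * P 0 1 * h3 + (-1) * P 0 2 * h3 + (-4) * P 0 3 * h3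
    have z03 : P 0 3 = 0 := by linear_combination 2 * E1_0_0 + E1_0_3 + 2 * E4_0_0 + E4_0_3 + (-4) * P 0 0 * h3 + (-3) * P 0 3 * h3
    have z10 : P 1 0 = 0 := by linear_combination 2 * E1_0_2 + E1_0_3 + E1_1_0 + E1_1_3 + E2_0_0 + E2_0_3 + 2 * E4_0_2 + E4_0_3 + (-4) * P 0 0 * h3 + (-2) * P 0 1 * h3 + (-1) * P 0 2 * h3 + (-1) * P 0 3 * h3 + (-1) * P 1 0 * h3 + (-1) * P 1 3 * h3 + (1) * P 2 0 * h3 + (1) * P 2 3 * h3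
    have z11 : P 1 1 = 0 := by linear_combination 2 * E1_0_1 + E1_0_2 + E1_0_3 + E1_1_0 + E1_1_2 + E1_1_3 + E2_0_0 + E2_0_2 + E2_0_3 + 2 * E4_0_1 + E4_0_2 + E4_0_3 + (-6) * P 0 0 * h3 + (-3) * P 0 1 * h3 + (-2) * P 0 2 * h3 + (-3) * P 0 3 * h3 + (-2) * P 1 0 * h3 + (-1) * P 1 3 * h3 + (1) * P 2 0 * h3 + (1) * P 2 2 * h3 + (1) * P 2 3 * h3
    have z12 : P 1 2 = 0 := by linear_combination 2 * E1_0_0 + 2 * E1_0_1 + E1_0_2 + E1_0_3 + E1_1_0 + 2 * E1_1_1 + E2_0_0 + 2 * E2_0_1 + 2 * E4_0_0 + 2 * E4_0_1 + E4_0_2 + E4_0_3 + (-8) * P 0 0 * h3 + (-3) * P 0 1 * h3 + (-2) * P 0 2 * h3 + (-6) * P 0 3 * h3 + (-2) * P 1 0 * h3 + (-1) * P 1 2 * h3 + (-2) * P 1 3 * h3 + (1) * P 2 0 * h3 + (2) * P 2 1 * h3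
    have z13 : P 1 3 = 0 := by linear_combination 2 * E1_0_1 + E1_0_2 + E1_1_0 + 2 * E1_1_3 + E2_0_0 + 2 * E2_0_3 + 2 * E4_0_1 + E4_0_2 + (-4) * P 0 0 * h3 + (-3) * P 0 1 * h3 + (-2) * P 0 2 * h3 + (-2) * P 0 3 * h3 + (-2) * P 1 0 * h3 + (-1) * P 1 3 * h3 + (1) * P 2 0 * h3 + (2) * P 2 3 * h3
    have z20 : P 2 0 = 0 := by linear_combination E1_0_1 + 2 * E1_0_3 + E2_0_0 + E4_0_1 + 2 * E4_0_3 + (-4) * P 0 0 * h3 + (-1) * P 0 1 * h3 + (-1) * P 0 2 * h3 + (-2) * P 0 3 * h3 + (1) * P 2 0 * h3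
    have z21 : P 2 1 = 0 := by linear_combination E1_0_0 + 2 * E1_0_1 + 2 * E1_0_2 + E1_0_3 + E2_0_1 + E4_0_0 + 2 * E4_0_1 + 2 * E4_0_2 + E4_0_3 + (-8) * P 0 0 * h3 + (-2) * P 0 1 * h3 + (-2) * P 0 2 * h3 + (-4) * P 0 3 * h3 + (1) * P 2 1 * h3
    have z22 : P 2 2 = 0 := by linear_combination 2 * E1_0_1 + 2 * E1_0_2 + E2_0_2 + 2 * E4_0_1 + 2 * E4_0_2 + (-6) * P 0 0 * h3 + (-2) * P 0 1 * h3 + (-2) * P 0 2 * h3 + (-2) * P 0 3 * h3 + (1) * P 2 2 * h3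
    have z23 : P 2 3 = 0 := by linear_combination 2 * E1_0_1 + 2 * E1_0_2 + 2 * E1_0_3 + E2_0_3 + 2 * E4_0_1 + 2 * E4_0_2 + 2 * E4_0_3 + (-8) * P 0 0 * h3 + (-2) * P 0 1 * h3 + (-2) * P 0 2 * h3 + (-3) * P 0 3 * h3 + (1) * P 2 3 * h3
    have z30 : P 3 0 = 0 := by linear_combination 2 * E1_0_1 + E1_0_2 + E1_0_3 + 2 * E1_1_0 + 2 * E1_1_3 + E2_0_0 + 2 * E2_0_3 + 2 * E4_0_0 + 2 * E4_0_1 + E4_0_2 + E4_0_3 + (-8) * P 0 0 * h3 + (-3) * P 0 1 * h3 + (-2) * P 0 2 * h3 + (-4) * P 0 3 * h3 + (-4) * P 1 0 * h3 + (-2) * P 1 3 * h3 + (2) * P 2 3 * h3 + (-1) * P 3 0 * h3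
    have z31 : P 3 1 = 0 := by linear_combination 2 * E1_0_1 + 2 * E1_0_3 + 2 * E1_1_0 + 2 * E1_1_2 + 2 * E1_1_3 + 2 * E2_0_0 + 2 * E2_0_1 + 2 * E2_0_2 + 2 * E2_0_3 + E4_0_1 + 2 * E4_0_3 + (-6) * P 0 0 * h3 + (-5) * P 0 1 * h3 + (-2) * P 0 2 * h3 + (-6) * P 0 3 * h3 + (-4) * P 1 0 * h3 + (-2) * P 1 3 * h3 + (2) * P 2 0 * h3 + (2) * P 2 1 * h3 + (2) * P 2 2 * h3 + (2) * P 2 3 * h3 + (1) * P 3 1 * h3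
    have z32 : P 3 2 = 0 := by linear_combination 2 * E1_0_0 + 2 * E1_0_1 + 2 * E1_1_0 + E1_1_1 + 2 * E2_0_0 + E2_0_1 + 2 * E2_0_2 + 2 * E4_0_0 + 2 * E4_0_1 + 2 * E4_0_2 + (-8) * P 0 0 * h3 + (-4) * P 0 1 * h3 + (-4) * P 0 2 * h3 + (-6) * P 0 3 * h3 + (-2) * P 1 0 * h3 + (-2) * P 1 2 * h3 + (-2) * P 1 3 * h3 + (2) * P 2 0 * h3 + (1) * P 2 1 * h3 + (-1) * P 3 2 * h3
    have z33 : P 3 3 = 0 := by linear_combination E1_0_0 + 2 * E1_0_1 + 2 * E1_0_3 + 2 * E1_1_0 + E1_1_3 + 2 * E2_0_0 + E4_0_0 + 2 * E4_0_1 + E4_0_3 + (-6) * P 0 0 * h3 + (-2) * P 0 1 * h3 + (-2) * P 0 2 * h3 + (-3) * P 0 3 * h3 + (-2) * P 1 0 * h3 + (-1) * P 1 3 * h3 + (2) * P 2 0 * h3 + (1) * P 2 3 * h3 + (1) * P 3 3 * h3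
    ext i j
    fin_cases i <;> fin_cases j
    exacts [z00, z01, z02, z03, z10, z11, z12, z13, z20, z21, z22, z23, z30, z31, z32, z33]
  constructor
  · rintro ⟨P, hP, h1, h2, h3, h4⟩
    rw [key P h1 h2 h4] at hP
    exact not_isUnit_zero hP
  · rintro ⟨P, hP, h1, h2, h3, h4⟩
    have hP' : IsUnit (P.map (Int.cast : ℤ → ZMod 3)) := by
      simpa using hP.map (Int.castRingHom (ZMod 3)).mapMatrix
    have m1 := congrArg (fun M => M.map (Int.cast : ℤ → ZMod 3)) h1
    have m2 := congrArg (fun M => M.map (Int.cast : ℤ → ZMod 3)) h2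
    have m4 := congrArg (fun M => M.map (Int.cast : ℤ → ZMod 3)) h4
    simp only [map_mul3, map_neg3] at m1 m2 m4
    rw [key _ m1 m2 m4] at hP'
    exact not_isUnit_zero hP'
end
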